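/- arXiv:2409.09933 — 5 statements merged into one kernel-verified Lean document; each statement's English description precedes it below -/
import Mathlib

section
/- If the matrix K is invertible, then for every index p with 0 ≤ p ≤ N one has Σ_{q=0}^{N} [K^{-1}]_{pq} φ_q(0) = 1. -/
/-!
The Lagrange basis sums to the constant polynomial `1`, so the row sums of `K` are
`φ_p(1) - ∫₀¹ φ_p' = φ_p(0)`. Thus `K` maps the all-ones vector to `(φ_q(0))_q`, and `K⁻¹` maps it
back.
-/

open Polynomial Matrix

theorem Polynomial.sum_eq_one_of_eval_eq_ite {R ι : Type*} [CommRing R] [IsDomain R] [Fintype ι]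
    [Nonempty ι] [DecidableEq ι] {τ : ι → R} (hτ : Function.Injective τ) {φ : ι → R[X]}
    (hdeg : ∀ i, (φ i).natDegree < Fintype.card ι)
    (heval : ∀ i j, (φ i).eval (τ j) = if i = j then 1 else 0) :
    ∑ i, φ i = 1 := by
  refine eq_of_natDegree_lt_card_of_eval_eq _ _ hτ (fun j => ?_) ?_
  · simp [eval_finsetSum, heval]
  · rw [natDegree_one, Nat.max_zero]
    exact lt_of_le_of_lt (natDegree_sum_le_of_forall_le _ _ fun i _ => Nat.le_pred_of_lt (hdeg i))
      (Nat.pred_lt Fintype.card_ne_zero)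

theorem Polynomial.integral_eval_derivative (p : ℝ[X]) (a b : ℝ) :
    ∫ t in a..b, (derivative p).eval t = p.eval b - p.eval a :=
  intervalIntegral.integral_eq_sub_of_hasDerivAt (fun x _ => p.hasDerivAt x)
    ((derivative p).continuous.intervalIntegrable a b)

noncomputable def aderDGMatrix {ι : Type*} (φ : ι → ℝ[X]) : Matrix ι ι ℝ :=
  Matrix.of fun p q =>
    (φ p).eval 1 * (φ q).eval 1 - ∫ t in (0:ℝ)..1, (derivative (φ p)).eval t * (φ q).eval t

theorem aderDGMatrix_mulVec_one {ι : Type*} [Fintype ι] {φ : ι → ℝ[X]} (hφ : ∑ q, φ q = 1) :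
    aderDGMatrix φ *ᵥ 1 = fun p => (φ p).eval 0 := by
  funext p
  have hint : ∀ q ∈ Finset.univ, IntervalIntegrable
      (fun t => (derivative (φ p)).eval t * (φ q).eval t) MeasureTheory.volume 0 1 :=
    fun q _ => ((derivative (φ p)).continuous.mul (φ q).continuous).intervalIntegrable 0 1
  calc (aderDGMatrix φ *ᵥ 1) p
      = (φ p).eval 1 * (∑ q, φ q).eval 1 -
          ∫ t in (0:ℝ)..1, (derivative (φ p)).eval t * (∑ q, φ q).eval t := by
        simp only [mulVec, dotProduct, Pi.one_apply, mul_one, aderDGMatrix, of_apply,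
          Finset.sum_sub_distrib, ← intervalIntegral.integral_finsetSum hint, eval_finsetSum, Finset.mul_sum]
    _ = (φ p).eval 0 := by
        simp [hφ, integral_eval_derivative]

theorem ader_dg_Kinv_phi0_general
    (N : ℕ)
    (τ : Fin (N + 1) → ℝ) (hτ : Function.Injective τ)
    (φ : Fin (N + 1) → Polynomial ℝ)
    (hφdeg : ∀ p, (φ p).natDegree ≤ N)
    (hφ : ∀ p l, (φ p).eval (τ l) = if p = l then 1 else 0)
    (K : Matrix (Fin (N + 1)) (Fin (N + 1)) ℝ)
    (hK : ∀ p q, K p q =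
      (φ p).eval 1 * (φ q).eval 1 -
        ∫ t in (0:ℝ)..1, (Polynomial.derivative (φ p)).eval t * (φ q).eval t)
    (hKunit : IsUnit K.det) :
    ∀ p, ∑ q, K⁻¹ p q * (φ q).eval 0 = 1 := by
  have hsum : ∑ q, φ q = 1 :=
    sum_eq_one_of_eval_eq_ite hτ (fun p => by simpa using Nat.lt_succ_of_le (hφdeg p)) hφ
  have hKφ : K = aderDGMatrix φ := Matrix.ext hK
  have := K.invertibleOfIsUnitDet hKunit
  have hinv : K⁻¹ *ᵥ (fun q => (φ q).eval 0) = 1 :=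
    Matrix.inv_mulVec_eq_vec (by rw [hKφ, aderDGMatrix_mulVec_one hsum])
  exact congrFun hinv

/-- If the matrix `K p q = φ_p(1) φ_q(1) − ∫₀¹ φ_p'(τ) φ_q(τ) dτ` built out of the
Lagrange basis polynomials `φ p` at `N+1` distinct nodes `τ` is invertible, then
`∑_q [K⁻¹] p q · φ_q(0) = 1` for every `p`. -/
theorem ader_dg_Kinv_phi0
    (N : ℕ) (hN : 1 ≤ N)
    (τ : Fin (N + 1) → ℝ) (hτ : Function.Injective τ)
    (φ : Fin (N + 1) → Polynomial ℝ)
    (hφdeg : ∀ p, (φ p).natDegree ≤ N)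
    (hφ : ∀ p l, (φ p).eval (τ l) = if p = l then 1 else 0)
    (K : Matrix (Fin (N + 1)) (Fin (N + 1)) ℝ)
    (hK : ∀ p q, K p q =
      (φ p).eval 1 * (φ q).eval 1 -
        ∫ t in (0:ℝ)..1, (Polynomial.derivative (φ p)).eval t * (φ q).eval t)
    (hKunit : IsUnit K.det) :
    ∀ p, ∑ q, K⁻¹ p q * (φ q).eval 0 = 1 :=
  ader_dg_Kinv_phi0_general N τ hτ φ hφdeg hφ K hK hKunit
end

section
/- Assume K is invertible and set B = K^{-1}·M. Then for any vectors u_n ∈ ℝ^K and f_0, …, f_N, q̂_0, …, q̂_N ∈ ℝ^K, the following two systems are equivalent: (i) Σ_{q=0}^{N} ( K_{pq} q̂_q − M_{pq} f_q ) = φ_p(0) u_n for all 0 ≤ p ≤ N; (ii) q̂_p − Σ_{q=0}^{N} B_{pq} f_q = u_n for all 0 ≤ p ≤ N. -/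
/-!
Interpolation at `N + 1` nodes reproduces constants, so `∑_q φ_q = 1`. Hence the row sums of `K`
telescope: `∑_q K_pq = φ_p(1) - ∫₀¹ φ_p' = φ_p(0)`, i.e. `K 𝟙 = φ(0)`. System (i) therefore reads
`K (q̂ - 𝟙 uₙ) = M f`, and multiplying by `K⁻¹` gives system (ii).
-/

open Polynomial

namespace Matrix

variable {ι R V : Type*} [Fintype ι] [CommRing R] [AddCommGroup V] [Module R V]

theorem sum_mul_apply_smul (A B : Matrix ι ι R) (v : ι → V) (p : ι) :
    ∑ q, (A * B) p q • v q = ∑ r, A p r • ∑ q, B r q • v q := by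
  simp only [mul_apply, Finset.sum_smul, Finset.smul_sum, mul_smul]
  exact Finset.sum_comm

theorem sum_one_apply_smul [DecidableEq ι] (v : ι → V) (p : ι) :
    ∑ q, (1 : Matrix ι ι R) p q • v q = v p := by
  simp [one_apply, ite_smul]

theorem sum_smul_eq_iff_of_isUnit_det [DecidableEq ι] {K : Matrix ι ι R} (hK : IsUnit K.det)
    (y z : ι → V) : (∀ p, ∑ q, K p q • y q = z p) ↔ ∀ p, y p = ∑ q, K⁻¹ p q • z q := by
  constructor
  · intro h p
    rw [← sum_one_apply_smul (R := R) y p, ← nonsing_inv_mul K hK, sum_mul_apply_smul]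
    simp only [h]
  · intro h p
    simp only [h, ← sum_mul_apply_smul, mul_nonsing_inv K hK, sum_one_apply_smul]

theorem sum_smul_sub_eq_iff_of_sum_row_eq [DecidableEq ι] {K : Matrix ι ι R}
    (hK : IsUnit K.det) (M : Matrix ι ι R) {c : ι → R} (hc : ∀ p, ∑ q, K p q = c p)
    (u : V) (f x : ι → V) :
    (∀ p, ∑ q, (K p q • x q - M p q • f q) = c p • u) ↔
      ∀ p, x p - ∑ q, (K⁻¹ * M) p q • f q = u := by
  have hcentered : ∀ p, (∑ q, (K p q • x q - M p q • f q) = c p • u ↔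
      ∑ q, K p q • (x q - u) = ∑ q, M p q • f q) := fun p => by
    simp only [smul_sub, Finset.sum_sub_distrib, ← Finset.sum_smul, hc]
    constructor <;> intro h <;> rw [← h] <;> abel
  simp only [hcentered, sum_smul_eq_iff_of_isUnit_det hK, ← sum_mul_apply_smul,
    sub_eq_iff_eq_add, add_comm]

end Matrix

namespace Polynomial

theorem sum_eq_one_of_eval_eq_ite_s4 {R ι : Type*} [CommRing R] [IsDomain R] [Fintype ι]
    [Nonempty ι] [DecidableEq ι] {τ : ι → R} (hτ : Function.Injective τ) {φ : ι → R[X]}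
    (hdeg : ∀ i, (φ i).natDegree < Fintype.card ι)
    (hφ : ∀ i j, (φ i).eval (τ j) = if i = j then 1 else 0) :
    ∑ i, φ i = 1 := by
  rw [← sub_eq_zero]
  refine eq_zero_of_natDegree_lt_card_of_eval_eq_zero _ hτ (fun j => ?_) ?_
  · simp [eval_finsetSum, hφ]
  · refine (natDegree_sub_le _ _).trans_lt (max_lt ?_ (by simp [Fintype.card_pos]))
    exact (natDegree_sum_le_of_forall_le _ _ fun i _ => Nat.le_pred_of_lt (hdeg i)).trans_lt
      (Nat.pred_lt Fintype.card_ne_zero)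

theorem integral_eval_derivative_s4 (P : ℝ[X]) (a b : ℝ) :
    ∫ t in a..b, P.derivative.eval t = P.eval b - P.eval a :=
  intervalIntegral.integral_eq_sub_of_hasDerivAt (fun x _ => P.hasDerivAt x)
    (P.derivative.continuous.intervalIntegrable a b)

theorem sum_eval_mul_sub_integral_derivative_mul {ι : Type*} [Fintype ι] {φ : ι → ℝ[X]}
    (hφ : ∑ i, φ i = 1) (P : ℝ[X]) (a b : ℝ) :
    ∑ q, (P.eval b * (φ q).eval b - ∫ t in a..b, P.derivative.eval t * (φ q).eval t) =
      P.eval a := by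
  have hsum : ∀ t, ∑ q, (φ q).eval t = 1 := fun t => by
    simpa [eval_finsetSum] using congrArg (eval t) hφ
  have hint : ∀ q, IntervalIntegrable (fun t => P.derivative.eval t * (φ q).eval t)
      MeasureTheory.volume a b := fun q =>
    (P.derivative.continuous.mul (φ q).continuous).intervalIntegrable a b
  rw [Finset.sum_sub_distrib, ← Finset.mul_sum, hsum,
    ← intervalIntegral.integral_finsetSum fun q _ => hint q]
  simp only [← Finset.mul_sum, hsum, mul_one, integral_eval_derivative_s4]
  ring

end Polynomial

theorem ader_dg_predictor_equiv_general
    (N : ℕ)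
    (τ : Fin (N + 1) → ℝ) (hτ : Function.Injective τ)
    (φ : Fin (N + 1) → Polynomial ℝ)
    (hφdeg : ∀ p, (φ p).natDegree ≤ N)
    (hφ : ∀ p l, (φ p).eval (τ l) = if p = l then 1 else 0)
    (K M : Matrix (Fin (N + 1)) (Fin (N + 1)) ℝ)
    (hK : ∀ p q, K p q =
      (φ p).eval 1 * (φ q).eval 1 -
        ∫ t in (0:ℝ)..1, (Polynomial.derivative (φ p)).eval t * (φ q).eval t)
    (hKunit : IsUnit K.det)
    (B : Matrix (Fin (N + 1)) (Fin (N + 1)) ℝ) (hB : B = K⁻¹ * M)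
    (d : ℕ)
    (un : Fin d → ℝ) (f qhat : Fin (N + 1) → Fin d → ℝ) :
    (∀ p, ∑ q, (K p q • qhat q - M p q • f q) = (φ p).eval 0 • un) ↔
      (∀ p, qhat p - ∑ q, B p q • f q = un) := by
  have hunity : ∑ p, φ p = 1 :=
    sum_eq_one_of_eval_eq_ite_s4 hτ (fun p => by simpa [Nat.lt_succ_iff] using hφdeg p) hφ
  have hrow : ∀ p, ∑ q, K p q = (φ p).eval 0 := fun p => by
    simpa only [hK] using sum_eval_mul_sub_integral_derivative_mul hunity (φ p) 0 1
  subst hB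
  exact Matrix.sum_smul_sub_eq_iff_of_sum_row_eq hKunit M hrow un f qhat

/-- With `K` invertible and `B = K⁻¹ · M`, for any vectors `uₙ, f_q, q̂_q ∈ ℝ^d`
the DG predictor system `∑_q (K p q • q̂_q − M p q • f_q) = φ_p(0) • uₙ` (for all `p`) is
equivalent to the reduced system `q̂_p − ∑_q B p q • f_q = uₙ` (for all `p`). -/
theorem ader_dg_predictor_equiv
    (N : ℕ) (hN : 1 ≤ N)
    (τ : Fin (N + 1) → ℝ) (hτ : Function.Injective τ)
    (φ : Fin (N + 1) → Polynomial ℝ)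
    (hφdeg : ∀ p, (φ p).natDegree ≤ N)
    (hφ : ∀ p l, (φ p).eval (τ l) = if p = l then 1 else 0)
    (K M : Matrix (Fin (N + 1)) (Fin (N + 1)) ℝ)
    (hK : ∀ p q, K p q =
      (φ p).eval 1 * (φ q).eval 1 -
        ∫ t in (0:ℝ)..1, (Polynomial.derivative (φ p)).eval t * (φ q).eval t)
    (hM : ∀ p q, M p q = ∫ t in (0:ℝ)..1, (φ p).eval t * (φ q).eval t)
    (hKunit : IsUnit K.det)
    (B : Matrix (Fin (N + 1)) (Fin (N + 1)) ℝ) (hB : B = K⁻¹ * M)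
    (d : ℕ) (hd : 1 ≤ d)
    (un : Fin d → ℝ) (f qhat : Fin (N + 1) → Fin d → ℝ) :
    (∀ p, ∑ q, (K p q • qhat q - M p q • f q) = (φ p).eval 0 • un) ↔
      (∀ p, qhat p - ∑ q, B p q • f q = un) :=
  ader_dg_predictor_equiv_general N τ hτ φ hφdeg hφ K M hK hKunit B hB d un f qhat
end

section
/- The matrix B has full rank N+1 (i.e. B is invertible), while the matrix B − 𝟙⊗w (with entries B_{pq} − w_q) has rank exactly N; in particular det(B − 𝟙⊗w) = 0. -/
open Polynomial intervalIntegral MeasureTheory Finset Matrix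

theorem poly_ftc' (p : Polynomial ℝ) (a b : ℝ) :
    ∫ t in a..b, (derivative p).eval t = p.eval b - p.eval a := by
  rw [integral_deriv_eq_sub' (fun x => p.eval x)
    (funext fun x => p.deriv)
    (fun x _ => p.differentiableAt)
    ((derivative p).continuous.continuousOn)]

theorem lagrange_sum' (N : ℕ) (τ : Fin (N + 1) → ℝ) (hτmono : StrictMono τ)
    (φ : Fin (N + 1) → Polynomial ℝ)
    (hφdeg : ∀ p, (φ p).natDegree ≤ N)
    (hφ : ∀ p l, (φ p).eval (τ l) = if p = l then 1 else 0) :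
    (∑ p, φ p) = 1 := by
  have h : (∑ p, φ p) - 1 = 0 := by
    apply Polynomial.eq_zero_of_natDegree_lt_card_of_eval_eq_zero _ hτmono.injective
    · intro l
      simp only [Polynomial.eval_sub, Polynomial.eval_finset_sum, Polynomial.eval_one, hφ]
      simp
    · calc ((∑ p, φ p) - 1).natDegree ≤ max (∑ p, φ p).natDegree (1 : ℝ[X]).natDegree :=
            Polynomial.natDegree_sub_le _ _
        _ ≤ N := by
            simp only [Polynomial.natDegree_one, max_le_iff]
            exact ⟨Polynomial.natDegree_sum_le_of_forall_le _ _ (fun p _ => hφdeg p), N.zero_le⟩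
        _ < Fintype.card (Fin (N + 1)) := by simp
  linear_combination (norm := ring_nf) h

theorem gram_det_ne (N : ℕ) (τ : Fin (N + 1) → ℝ) (hτmono : StrictMono τ)
    (φ : Fin (N + 1) → Polynomial ℝ)
    (hφ : ∀ p l, (φ p).eval (τ l) = if p = l then 1 else 0)
    (M : Matrix (Fin (N + 1)) (Fin (N + 1)) ℝ)
    (hM : ∀ p q, M p q = ∫ t in (0:ℝ)..1, (φ p).eval t * (φ q).eval t) :
    M.det ≠ 0 := by
  intro hdet
  obtain ⟨v, hv, hMv⟩ := Matrix.exists_mulVec_eq_zero_iff.mpr hdet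
  set f : Polynomial ℝ := ∑ p, Polynomial.C (v p) * φ p with hf
  have hfeval : ∀ x, f.eval x = ∑ p, v p * (φ p).eval x := by
    intro x; simp [hf, Polynomial.eval_finset_sum]
  have hfτ : ∀ l, f.eval (τ l) = v l := by
    intro l; rw [hfeval]
    simp [hφ]
  have hfne : f ≠ 0 := by
    intro h0
    apply hv
    funext l
    have := hfτ l
    rw [h0] at this
    simpa using this.symm
  -- the quadratic form is the integral of f²
  have hstep : ∀ p, (∑ q, M p q * v q) = ∫ t in (0:ℝ)..1, (φ p).eval t * f.eval t := by
    intro p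
    have : ∀ t, (φ p).eval t * f.eval t = ∑ q, v q * ((φ p).eval t * (φ q).eval t) := by
      intro t
      rw [hfeval, Finset.mul_sum]
      exact Finset.sum_congr rfl fun q _ => by ring
    rw [intervalIntegral.integral_congr (g := fun t => ∑ q, v q * ((φ p).eval t * (φ q).eval t))
      (fun t _ => this t)]
    rw [intervalIntegral.integral_finset_sum (f := fun q t => v q * ((φ p).eval t * (φ q).eval t)) (fun q _ =>
      (continuous_const.mul ((φ p).continuous.mul (φ q).continuous)).intervalIntegrable _ _)]
    apply Finset.sum_congr rfl
    intro q _
    rw [intervalIntegral.integral_const_mul, hM p q]; ring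
  have hquad : (0:ℝ) = ∫ t in (0:ℝ)..1, (f.eval t)^2 := by
    have h0 : v ⬝ᵥ M.mulVec v = 0 := by rw [hMv]; simp
    have h1 : v ⬝ᵥ M.mulVec v = ∑ p, v p * ∫ t in (0:ℝ)..1, (φ p).eval t * f.eval t := by
      simp only [dotProduct, Matrix.mulVec]
      exact Finset.sum_congr rfl fun p _ => by rw [← hstep p]
    have h2 : ∀ t, (f.eval t)^2 = ∑ p, v p * ((φ p).eval t * f.eval t) := by
      intro t
      have hft := hfeval t
      calc (f.eval t)^2 = (∑ p, v p * (φ p).eval t) * f.eval t := by rw [← hft]; ring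
        _ = ∑ p, v p * ((φ p).eval t * f.eval t) := by
            rw [Finset.sum_mul]
            exact Finset.sum_congr rfl fun p _ => by ring
    have hI : (∫ t in (0:ℝ)..1, (f.eval t)^2)
        = ∑ p, v p * ∫ t in (0:ℝ)..1, (φ p).eval t * f.eval t := by
      rw [intervalIntegral.integral_congr (g := fun t => ∑ p, v p * ((φ p).eval t * f.eval t))
        (fun t _ => h2 t)]
      rw [intervalIntegral.integral_finset_sum (f := fun p t => v p * ((φ p).eval t * f.eval t)) (fun p _ =>
        (continuous_const.mul ((φ p).continuous.mul f.continuous)).intervalIntegrable _ _)]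
      exact Finset.sum_congr rfl fun p _ => by rw [intervalIntegral.integral_const_mul]
    rw [hI, ← h1, h0]
  -- derive contradiction
  have h01 : (0:ℝ) ≤ 1 := by norm_num
  rw [intervalIntegral.integral_of_le h01] at hquad
  have hint : Integrable (fun t => (f.eval t)^2) (volume.restrict (Set.Ioc (0:ℝ) 1)) := by
    have : Continuous fun t : ℝ => (f.eval t)^2 := (f.continuous.pow 2)
    exact this.integrableOn_Ioc
  have hae := (MeasureTheory.integral_eq_zero_iff_of_nonneg (fun t => sq_nonneg _) hint).mp
    hquad.symm
  have hnull : volume.restrict (Set.Ioc (0:ℝ) 1) {t | (f.eval t)^2 ≠ 0} = 0 := by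
    have := hae
    rw [Filter.EventuallyEq, MeasureTheory.ae_iff] at this
    simpa using this
  have hms : MeasurableSet {t : ℝ | (f.eval t)^2 ≠ 0} := by
    have hc : IsClosed {t : ℝ | (f.eval t)^2 = 0} :=
      isClosed_eq (f.continuous.pow 2) continuous_const
    simpa [Set.compl_setOf] using hc.measurableSet.compl
  rw [MeasureTheory.Measure.restrict_apply hms] at hnull
  have hroots : (volume {t : ℝ | f.IsRoot t} : ENNReal) = 0 :=
    (Polynomial.finite_setOf_isRoot hfne).measure_zero _
  have hsub : Set.Ioc (0:ℝ) 1 ⊆ ({t | (f.eval t)^2 ≠ 0} ∩ Set.Ioc 0 1) ∪ {t | f.IsRoot t} := by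
    intro t ht
    by_cases h : f.eval t = 0
    · exact Or.inr h
    · exact Or.inl ⟨pow_ne_zero _ h, ht⟩
  have : volume (Set.Ioc (0:ℝ) 1) = 0 := by
    refine le_antisymm ?_ zero_le
    calc volume (Set.Ioc (0:ℝ) 1) ≤
        volume (({t | (f.eval t)^2 ≠ 0} ∩ Set.Ioc 0 1) ∪ {t | f.IsRoot t}) := measure_mono hsub
      _ ≤ volume ({t | (f.eval t)^2 ≠ 0} ∩ Set.Ioc 0 1) + volume {t | f.IsRoot t} :=
          measure_union_le _ _
      _ = 0 := by rw [hnull, hroots, add_zero]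
  simp [Real.volume_Ioc] at this



/-- The matrix `B = K⁻¹ M` of the ADER-DG method has full rank `N+1` (it is
invertible), while `B − 𝟙⊗w` (entries `B p q − w q`) has rank exactly `N`; in particular its
determinant vanishes. -/
theorem ader_dg_B_rank
    (N : ℕ) (hN : 1 ≤ N)
    (τ : Fin (N + 1) → ℝ) (hτmono : StrictMono τ)
    (hτmem : ∀ p, τ p ∈ Set.Ioo (0:ℝ) 1)
    (P : Polynomial ℝ) (hPdeg : P.natDegree = N + 1)
    (hPorth : ∀ Q : Polynomial ℝ, Q.natDegree ≤ N →
      (∫ t in (0:ℝ)..1, P.eval t * Q.eval t) = 0)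
    (hPzero : ∀ p, P.eval (τ p) = 0)
    (φ : Fin (N + 1) → Polynomial ℝ)
    (hφdeg : ∀ p, (φ p).natDegree ≤ N)
    (hφ : ∀ p l, (φ p).eval (τ l) = if p = l then 1 else 0)
    (w : Fin (N + 1) → ℝ) (hw : ∀ p, w p = ∫ t in (0:ℝ)..1, (φ p).eval t)
    (K M : Matrix (Fin (N + 1)) (Fin (N + 1)) ℝ)
    (hK : ∀ p q, K p q =
      (φ p).eval 1 * (φ q).eval 1 -
        ∫ t in (0:ℝ)..1, (Polynomial.derivative (φ p)).eval t * (φ q).eval t)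
    (hM : ∀ p q, M p q = ∫ t in (0:ℝ)..1, (φ p).eval t * (φ q).eval t)
    (hKunit : IsUnit K.det)
    (B : Matrix (Fin (N + 1)) (Fin (N + 1)) ℝ) (hB : B = K⁻¹ * M) :
    IsUnit B.det ∧
      (Matrix.of (fun p q => B p q - w q)).rank = N ∧
      (Matrix.of (fun p q => B p q - w q)).det = 0 := by
  have hsum : (∑ p, φ p) = 1 := lagrange_sum' N τ hτmono φ hφdeg hφ
  have hsumx : ∀ x : ℝ, (∑ p, (φ p).eval x) = 1 := by
    intro x
    have := congrArg (Polynomial.eval x) hsum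
    simpa [Polynomial.eval_finset_sum] using this
  have hMdet : M.det ≠ 0 := gram_det_ne N τ hτmono φ hφ M hM
  have hMunit : IsUnit M.det := isUnit_iff_ne_zero.mpr hMdet
  have hBdet : IsUnit B.det := by
    rw [hB, Matrix.det_mul]
    exact (Matrix.isUnit_nonsing_inv_det K hKunit).mul hMunit
  -- row sums
  have hKrow : ∀ p, (∑ q, K p q) = (φ p).eval 0 := by
    intro p
    have hint : (∑ q, ∫ t in (0:ℝ)..1, (derivative (φ p)).eval t * (φ q).eval t)
        = (φ p).eval 1 - (φ p).eval 0 := by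
      rw [← intervalIntegral.integral_finset_sum (f := fun q t => (derivative (φ p)).eval t * (φ q).eval t) (fun q _ =>
        ((derivative (φ p)).continuous.mul (φ q).continuous).intervalIntegrable _ _)]
      have heq : ∀ t : ℝ, (∑ q, (derivative (φ p)).eval t * (φ q).eval t)
          = (derivative (φ p)).eval t := by
        intro t; rw [← Finset.mul_sum, hsumx t, mul_one]
      rw [intervalIntegral.integral_congr (g := fun t => (derivative (φ p)).eval t)
        (fun t _ => heq t)]
      exact poly_ftc' _ 0 1
    simp only [hK]
    rw [Finset.sum_sub_distrib, ← Finset.mul_sum, hint, hsumx 1]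
    ring
  have hMrow : ∀ p, (∑ q, M p q) = w p := by
    intro p
    simp only [hM]
    rw [← intervalIntegral.integral_finset_sum (f := fun q t => (φ p).eval t * (φ q).eval t) (fun q _ =>
      ((φ p).continuous.mul (φ q).continuous).intervalIntegrable _ _), hw]
    apply intervalIntegral.integral_congr
    intro t _
    show (∑ q, (φ p).eval t * (φ q).eval t) = (φ p).eval t
    rw [← Finset.mul_sum, hsumx t, mul_one]
  have hMsymm : Mᵀ = M := by
    ext p q
    simp only [Matrix.transpose_apply, hM]
    exact intervalIntegral.integral_congr fun t _ => mul_comm _ _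
  -- key vectors
  set φ0 : Fin (N + 1) → ℝ := fun p => (φ p).eval 0 with hφ0
  have hK1 : K.mulVec (fun _ => 1) = φ0 := by
    funext p; simpa [Matrix.mulVec, dotProduct] using hKrow p
  have hM1 : M.mulVec (fun _ => 1) = w := by
    funext p; simpa [Matrix.mulVec, dotProduct] using hMrow p
  set v₀ : Fin (N + 1) → ℝ := M⁻¹.mulVec φ0 with hv₀def
  have hMv₀ : M.mulVec v₀ = φ0 := by
    rw [hv₀def, Matrix.mulVec_mulVec, Matrix.mul_nonsing_inv _ hMunit, Matrix.one_mulVec]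
  have hφ0sum : (∑ p, φ0 p) = 1 := hsumx 0
  have hv₀ne : v₀ ≠ 0 := by
    intro h
    rw [h, Matrix.mulVec_zero] at hMv₀
    rw [← hMv₀] at hφ0sum
    simpa using hφ0sum
  have hwv₀ : w ⬝ᵥ v₀ = 1 := by
    have h1 : w = Matrix.vecMul (fun _ => 1) M := by
      rw [← Matrix.mulVec_transpose, hMsymm, hM1]
    rw [h1, ← Matrix.dotProduct_mulVec, hMv₀]
    simpa [dotProduct] using hφ0sum
  have hMinj : ∀ x y : Fin (N + 1) → ℝ, M.mulVec x = M.mulVec y → x = y := by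
    intro x y hxy
    have := congrArg M⁻¹.mulVec hxy
    rwa [Matrix.mulVec_mulVec, Matrix.mulVec_mulVec, Matrix.nonsing_inv_mul _ hMunit,
      Matrix.one_mulVec, Matrix.one_mulVec] at this
  have hKinj : ∀ x y : Fin (N + 1) → ℝ, K.mulVec x = K.mulVec y → x = y := by
    intro x y hxy
    have := congrArg K⁻¹.mulVec hxy
    rwa [Matrix.mulVec_mulVec, Matrix.mulVec_mulVec, Matrix.nonsing_inv_mul _ hKunit,
      Matrix.one_mulVec, Matrix.one_mulVec] at this
  have hKM : K * B = M := by
    rw [hB, ← Matrix.mul_assoc, Matrix.mul_nonsing_inv _ hKunit, Matrix.one_mul]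
  have hBv₀ : B.mulVec v₀ = fun _ => 1 := by
    apply hKinj
    rw [Matrix.mulVec_mulVec, hKM, hMv₀, hK1]
  set C : Matrix (Fin (N + 1)) (Fin (N + 1)) ℝ := Matrix.of (fun p q => B p q - w q) with hC
  have hCmul : ∀ (v : Fin (N + 1) → ℝ) p, C.mulVec v p = B.mulVec v p - w ⬝ᵥ v := by
    intro v p
    simp only [hC, Matrix.mulVec, dotProduct, Matrix.of_apply, sub_mul,
      Finset.sum_sub_distrib]
  have hker : ∀ v : Fin (N + 1) → ℝ, C.mulVec v = 0 ↔ ∃ c : ℝ, v = c • v₀ := by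
    intro v
    constructor
    · intro h
      refine ⟨w ⬝ᵥ v, ?_⟩
      apply hMinj
      have hBv : B.mulVec v = fun _ => (w ⬝ᵥ v) := by
        funext p
        have := congrFun h p
        rw [hCmul v p] at this
        have : B.mulVec v p - w ⬝ᵥ v = 0 := this
        linarith
      have hMvK : M.mulVec v = K.mulVec (fun _ => (w ⬝ᵥ v)) := by
        rw [← hKM, ← Matrix.mulVec_mulVec, hBv]
      have h2 : (fun _ => (w ⬝ᵥ v) : Fin (N + 1) → ℝ) = (w ⬝ᵥ v) • (fun _ => (1:ℝ)) := by
        funext p; simp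
      calc M.mulVec v = K.mulVec ((w ⬝ᵥ v) • (fun _ => (1:ℝ))) := by rw [hMvK, h2]
        _ = (w ⬝ᵥ v) • K.mulVec (fun _ => (1:ℝ)) := Matrix.mulVec_smul _ _ _
        _ = (w ⬝ᵥ v) • M.mulVec v₀ := by rw [hK1, hMv₀]
        _ = M.mulVec ((w ⬝ᵥ v) • v₀) := (Matrix.mulVec_smul _ _ _).symm
    · rintro ⟨c, rfl⟩
      funext p
      rw [hCmul]
      have hb : (B.mulVec (c • v₀)) p = c := by
        rw [Matrix.mulVec_smul, hBv₀]; simp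
      have hd : w ⬝ᵥ (c • v₀) = c := by
        rw [dotProduct_smul, hwv₀]; simp
      rw [hb, hd]
      simp
  have hCdet : C.det = 0 :=
    Matrix.exists_mulVec_eq_zero_iff.mp ⟨v₀, hv₀ne, (hker v₀).mpr ⟨1, (one_smul _ _).symm⟩⟩
  have hkerEq : LinearMap.ker C.mulVecLin = Submodule.span ℝ {v₀} := by
    ext v
    rw [LinearMap.mem_ker, Matrix.mulVecLin_apply, Submodule.mem_span_singleton]
    rw [hker v]
    constructor
    · rintro ⟨c, h⟩; exact ⟨c, h.symm⟩
    · rintro ⟨c, h⟩; exact ⟨c, h.symm⟩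
  have hrank : C.rank = N := by
    have h1 := LinearMap.finrank_range_add_finrank_ker C.mulVecLin
    rw [hkerEq, finrank_span_singleton hv₀ne] at h1
    rw [Module.finrank_fintype_fun_eq_card] at h1
    simp only [Fintype.card_fin] at h1
    have : C.rank = Module.finrank ℝ ↥(LinearMap.range C.mulVecLin) := rfl
    omega
  exact ⟨hBdet, hrank, hCdet⟩
end

section
/- A-stability of the ADER-DG method with local DG predictor: for every z ∈ ℂ with Re(z) < 0, the matrix I − z·B is invertible and the stability function satisfies |R(z)| < 1, where R(z) = 1 + z · w^T (I − z B)^{-1} 𝟙. -/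
open MeasureTheory Finset

lemma aux_int_pos {f : ℝ → ℝ} (hf : Continuous f) (hnn : ∀ t, 0 ≤ f t)
    {c : ℝ} (hc : c ∈ Set.Ioo (0:ℝ) 1) (hfc : 0 < f c) :
    0 < ∫ t in (0:ℝ)..1, f t := by
  rw [intervalIntegral.integral_pos_iff_support_of_nonneg_ae
    (Filter.Eventually.of_forall hnn) (hf.intervalIntegrable 0 1)]
  refine ⟨one_pos, ?_⟩
  have hopen : IsOpen (f ⁻¹' Set.Ioi 0 ∩ Set.Ioo 0 1) :=
    (isOpen_Ioi.preimage hf).inter isOpen_Ioo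
  have hsub : f ⁻¹' Set.Ioi 0 ∩ Set.Ioo 0 1 ⊆ Function.support f ∩ Set.Ioc 0 1 := by
    rintro x ⟨hx1, hx2⟩
    exact ⟨ne_of_gt hx1, hx2.1, le_of_lt hx2.2⟩
  exact lt_of_lt_of_le (hopen.measure_pos volume ⟨c, hfc, hc⟩) (measure_mono hsub)

lemma aux_zero_of_integral {f : ℝ → ℝ} (hf : Continuous f) (hnn : ∀ t, 0 ≤ f t)
    (hI : (∫ t in (0:ℝ)..1, f t) = 0) {c : ℝ} (hc : c ∈ Set.Ioo (0:ℝ) 1) : f c = 0 := by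
  by_contra h
  exact absurd hI (ne_of_gt (aux_int_pos hf hnn hc (lt_of_le_of_ne (hnn c) (Ne.symm h))))

lemma aux_bilin (n : ℕ) (c e : Fin n → ℂ) (f g : Fin n → Polynomial ℝ) :
    (∑ p, ∑ q, c p * e q * ((∫ t in (0:ℝ)..1, (f p).eval t * (g q).eval t : ℝ) : ℂ))
      = ∫ t in (0:ℝ)..1, (∑ p, c p * (((f p).eval t : ℝ) : ℂ)) * (∑ q, e q * (((g q).eval t : ℝ) : ℂ)) := by
  have hcont : ∀ (p q : Fin n),
      Continuous fun t : ℝ => c p * e q * Complex.ofReal ((f p).eval t * (g q).eval t) := by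
    intro p q
    exact continuous_const.mul (Complex.continuous_ofReal.comp ((f p).continuous.mul (g q).continuous))
  have h1 : ∀ t : ℝ, (∑ p, c p * (((f p).eval t : ℝ) : ℂ)) * (∑ q, e q * (((g q).eval t : ℝ) : ℂ))
      = ∑ p, ∑ q, c p * e q * Complex.ofReal ((f p).eval t * (g q).eval t) := by
    intro t
    rw [Finset.sum_mul_sum]
    refine Finset.sum_congr rfl fun p _ => Finset.sum_congr rfl fun q _ => ?_
    push_cast; ring
  simp only [h1]
  rw [intervalIntegral.integral_finset_sum (fun p _ =>
    ((continuous_finset_sum _ fun q _ => hcont p q).intervalIntegrable 0 1))]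
  refine Finset.sum_congr rfl fun p _ => ?_
  rw [intervalIntegral.integral_finset_sum (fun q _ => (hcont p q).intervalIntegrable 0 1)]
  refine Finset.sum_congr rfl fun q _ => ?_
  rw [intervalIntegral.integral_const_mul, intervalIntegral.integral_ofReal]

lemma aux_energy (n : ℕ) (φ : Fin n → Polynomial ℝ)
    (K M : Matrix (Fin n) (Fin n) ℝ)
    (hK : ∀ p q, K p q = (φ p).eval 1 * (φ q).eval 1 -
        ∫ t in (0:ℝ)..1, (Polynomial.derivative (φ p)).eval t * (φ q).eval t)
    (hM : ∀ p q, M p q = ∫ t in (0:ℝ)..1, (φ p).eval t * (φ q).eval t)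
    (z : ℂ) (U : Fin n → ℂ) :
    (∑ p, ∑ q, (starRingEnd ℂ) (U p) * (((K p q : ℝ) : ℂ) - z * ((M p q : ℝ) : ℂ)) * U q).re
      = Complex.normSq (∑ q, U q * (((φ q).eval 1 : ℝ) : ℂ)) / 2
        + Complex.normSq (∑ q, U q * (((φ q).eval 0 : ℝ) : ℂ)) / 2
        - z.re * ∫ t in (0:ℝ)..1, Complex.normSq (∑ q, U q * (((φ q).eval t : ℝ) : ℂ)) := by
  set u : ℝ → ℂ := fun t => ∑ q, U q * (((φ q).eval t : ℝ) : ℂ) with hu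
  set d : ℝ → ℂ := fun t => ∑ q, U q * ((((Polynomial.derivative (φ q)).eval t : ℝ)) : ℂ) with hd
  have hcu : Continuous u :=
    continuous_finset_sum _ fun q _ => continuous_const.mul (Complex.continuous_ofReal.comp (φ q).continuous)
  have hcd : Continuous d :=
    continuous_finset_sum _ fun q _ => continuous_const.mul
      (Complex.continuous_ofReal.comp (Polynomial.derivative (φ q)).continuous)
  have hderiv : ∀ t : ℝ, HasDerivAt u (d t) t := fun t =>
    HasDerivAt.fun_sum fun q _ => (((φ q).hasDerivAt t).ofReal_comp).const_mul (U q)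
  -- conjugate of u
  have hconj_u : ∀ t : ℝ, (starRingEnd ℂ) (u t) = ∑ q, (starRingEnd ℂ) (U q) * (((φ q).eval t : ℝ) : ℂ) := by
    intro t
    rw [hu]; simp [map_sum]
  have hconj_d : ∀ t : ℝ, (starRingEnd ℂ) (d t) = ∑ q, (starRingEnd ℂ) (U q) * ((((Polynomial.derivative (φ q)).eval t : ℝ)) : ℂ) := by
    intro t
    rw [hd]; simp [map_sum]
  -- FTC for normSq ∘ u
  have hg : ∀ t : ℝ, HasDerivAt (fun s => Complex.normSq (u s)) (2 * ((starRingEnd ℂ) (d t) * u t).re) t := by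
    intro t
    have h1 : HasDerivAt (fun s => (u s).re) ((d t).re) t :=
      (Complex.reCLM.hasFDerivAt.comp_hasDerivAt t (hderiv t))
    have h2 : HasDerivAt (fun s => (u s).im) ((d t).im) t :=
      (Complex.imCLM.hasFDerivAt.comp_hasDerivAt t (hderiv t))
    have h : HasDerivAt (fun s => (u s).re * (u s).re + (u s).im * (u s).im) _ t := (h1.mul h1).add (h2.mul h2)
    have heq : (fun s => (u s).re * (u s).re + (u s).im * (u s).im) = fun s => Complex.normSq (u s) := by
      funext s; rw [Complex.normSq_apply]
    rw [heq] at h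
    convert h using 1
    simp [Complex.mul_re, Complex.conj_re, Complex.conj_im]
    ring
  have hftc : (∫ t in (0:ℝ)..1, 2 * ((starRingEnd ℂ) (d t) * u t).re)
      = Complex.normSq (u 1) - Complex.normSq (u 0) := by
    refine intervalIntegral.integral_eq_sub_of_hasDerivAt (fun t _ => hg t) ?_
    exact (continuous_const.mul (Complex.continuous_re.comp
      ((Complex.continuous_conj.comp hcd).mul hcu))).intervalIntegrable 0 1
  -- bilinear identities
  have hSK2 : (∑ p, ∑ q, (starRingEnd ℂ) (U p) * U q *
        ((∫ t in (0:ℝ)..1, (Polynomial.derivative (φ p)).eval t * (φ q).eval t : ℝ) : ℂ))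
      = ∫ t in (0:ℝ)..1, (starRingEnd ℂ) (d t) * u t := by
    rw [aux_bilin n (fun p => (starRingEnd ℂ) (U p)) U (fun p => Polynomial.derivative (φ p)) φ]
    refine intervalIntegral.integral_congr fun t _ => ?_
    rw [hconj_d t]
  have hSM2 : (∑ p, ∑ q, (starRingEnd ℂ) (U p) * U q *
        ((∫ t in (0:ℝ)..1, (φ p).eval t * (φ q).eval t : ℝ) : ℂ))
      = ((∫ t in (0:ℝ)..1, Complex.normSq (u t) : ℝ) : ℂ) := by
    rw [aux_bilin n (fun p => (starRingEnd ℂ) (U p)) U φ φ]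
    have hpt : ∀ t : ℝ, (∑ p, (starRingEnd ℂ) (U p) * (((φ p).eval t : ℝ) : ℂ))
        * (∑ q, U q * (((φ q).eval t : ℝ) : ℂ))
        = ((Complex.normSq (u t) : ℝ) : ℂ) := by
      intro t
      rw [← hconj_u t]
      have hut : u t = ∑ q, U q * (((φ q).eval t : ℝ) : ℂ) := rfl
      rw [← hut, ← Complex.normSq_eq_conj_mul_self]
    rw [intervalIntegral.integral_congr (fun t _ => hpt t), intervalIntegral.integral_ofReal]
  -- split the double sum
  have hsplit : (∑ p, ∑ q, (starRingEnd ℂ) (U p) * (((K p q : ℝ) : ℂ) - z * ((M p q : ℝ) : ℂ)) * U q)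
      = ((Complex.normSq (u 1) : ℝ) : ℂ)
        - (∫ t in (0:ℝ)..1, (starRingEnd ℂ) (d t) * u t)
        - z * ((∫ t in (0:ℝ)..1, Complex.normSq (u t) : ℝ) : ℂ) := by
    have expand : ∀ p q, (starRingEnd ℂ) (U p) * (((K p q : ℝ) : ℂ) - z * ((M p q : ℝ) : ℂ)) * U q
        = ((starRingEnd ℂ) (U p) * (((φ p).eval 1 : ℝ) : ℂ)) * (U q * (((φ q).eval 1 : ℝ) : ℂ))
          - (starRingEnd ℂ) (U p) * U q *
              ((∫ t in (0:ℝ)..1, (Polynomial.derivative (φ p)).eval t * (φ q).eval t : ℝ) : ℂ)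
          - z * ((starRingEnd ℂ) (U p) * U q *
              ((∫ t in (0:ℝ)..1, (φ p).eval t * (φ q).eval t : ℝ) : ℂ)) := by
      intro p q
      rw [hK p q, hM p q]
      push_cast
      ring
    simp only [expand, Finset.sum_sub_distrib, ← Finset.mul_sum]
    rw [← Finset.sum_mul]
    rw [hSK2, hSM2]
    have h1 : (∑ p, (starRingEnd ℂ) (U p) * (((φ p).eval 1 : ℝ) : ℂ)) * (∑ q, U q * (((φ q).eval 1 : ℝ) : ℂ))
        = ((Complex.normSq (u 1) : ℝ) : ℂ) := by
      rw [← hconj_u 1]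
      have hut : u 1 = ∑ q, U q * (((φ q).eval 1 : ℝ) : ℂ) := rfl
      rw [← hut, ← Complex.normSq_eq_conj_mul_self]
    rw [h1]
  rw [hsplit]
  have hre : (∫ t in (0:ℝ)..1, (starRingEnd ℂ) (d t) * u t).re
      = ∫ t in (0:ℝ)..1, ((starRingEnd ℂ) (d t) * u t).re := by
    have hi : IntervalIntegrable (fun t => (starRingEnd ℂ) (d t) * u t) MeasureTheory.volume 0 1 :=
      ((Complex.continuous_conj.comp hcd).mul hcu).intervalIntegrable 0 1
    have h := Complex.reCLM.intervalIntegral_comp_comm hi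
    simpa using h.symm
  have h2 : (∫ t in (0:ℝ)..1, ((starRingEnd ℂ) (d t) * u t).re)
      = (Complex.normSq (u 1) - Complex.normSq (u 0)) / 2 := by
    rw [← hftc, intervalIntegral.integral_const_mul]
    ring
  have hzre : (z * ((∫ t in (0:ℝ)..1, Complex.normSq (u t) : ℝ) : ℂ)).re
      = z.re * ∫ t in (0:ℝ)..1, Complex.normSq (u t) := by
    simp [Complex.mul_re]
  simp only [Complex.sub_re, Complex.ofReal_re, hre, h2, hzre]
  have h00 : Complex.normSq (∑ q, U q * (((φ q).eval 0 : ℝ) : ℂ)) = Complex.normSq (u 0) := rfl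
  have h11 : Complex.normSq (∑ q, U q * (((φ q).eval 1 : ℝ) : ℂ)) = Complex.normSq (u 1) := rfl
  rw [h00, h11]
  ring

/-- A-stability of the ADER-DG method with local DG predictor: for every `z ∈ ℂ`
with `Re z < 0`, the matrix `I − z•B` is invertible and the stability function
`R(z) = 1 + z · wᵀ (I − z B)⁻¹ 𝟙` satisfies `|R(z)| < 1`. -/
theorem ader_dg_A_stability
    (N : ℕ) (hN : 1 ≤ N)
    (τ : Fin (N + 1) → ℝ) (hτmono : StrictMono τ)
    (hτmem : ∀ p, τ p ∈ Set.Ioo (0:ℝ) 1)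
    (P : Polynomial ℝ) (hPdeg : P.natDegree = N + 1)
    (hPorth : ∀ Q : Polynomial ℝ, Q.natDegree ≤ N →
      (∫ t in (0:ℝ)..1, P.eval t * Q.eval t) = 0)
    (hPzero : ∀ p, P.eval (τ p) = 0)
    (φ : Fin (N + 1) → Polynomial ℝ)
    (hφdeg : ∀ p, (φ p).natDegree ≤ N)
    (hφ : ∀ p l, (φ p).eval (τ l) = if p = l then 1 else 0)
    (w : Fin (N + 1) → ℝ) (hw : ∀ p, w p = ∫ t in (0:ℝ)..1, (φ p).eval t)
    (K M : Matrix (Fin (N + 1)) (Fin (N + 1)) ℝ)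
    (hK : ∀ p q, K p q =
      (φ p).eval 1 * (φ q).eval 1 -
        ∫ t in (0:ℝ)..1, (Polynomial.derivative (φ p)).eval t * (φ q).eval t)
    (hM : ∀ p q, M p q = ∫ t in (0:ℝ)..1, (φ p).eval t * (φ q).eval t)
    (hKunit : IsUnit K.det)
    (B : Matrix (Fin (N + 1)) (Fin (N + 1)) ℝ) (hB : B = K⁻¹ * M)
    (Bc : Matrix (Fin (N + 1)) (Fin (N + 1)) ℂ) (hBc : ∀ p q, Bc p q = (B p q : ℂ)) :
    ∀ z : ℂ, z.re < 0 →
      IsUnit (1 - z • Bc).det ∧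
        ‖(1 + z * ∑ p, ∑ q, (w p : ℂ) * (1 - z • Bc)⁻¹ p q)‖ < 1 := by
  intro z hz
  -- the Lagrange basis sums to 1
  have hsumφ : (∑ q, φ q) = (1 : Polynomial ℝ) := by
    have h0 : ((∑ q, φ q) - 1 : Polynomial ℝ) = 0 := by
      apply Polynomial.eq_zero_of_natDegree_lt_card_of_eval_eq_zero _ hτmono.injective
      · intro l
        simp [Polynomial.eval_finset_sum, hφ]
      · calc ((∑ q, φ q) - 1 : Polynomial ℝ).natDegree
            ≤ max (∑ q, φ q : Polynomial ℝ).natDegree (1 : Polynomial ℝ).natDegree :=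
              Polynomial.natDegree_sub_le _ _
          _ ≤ N := by
              apply max_le
              · exact Polynomial.natDegree_sum_le_of_forall_le _ _ fun q _ => hφdeg q
              · simp
          _ < Fintype.card (Fin (N + 1)) := by simp
    linear_combination (norm := abel) h0
  have hsum : ∀ t : ℝ, (∑ q, (φ q).eval t) = 1 := by
    intro t
    have := congrArg (Polynomial.eval t) hsumφ
    simpa [Polynomial.eval_finset_sum] using this
  have hdsum : ∀ t : ℝ, (∑ q, (Polynomial.derivative (φ q)).eval t) = 0 := by
    intro t
    have h := congrArg (⇑Polynomial.derivative) hsumφ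
    rw [map_sum] at h
    have := congrArg (Polynomial.eval t) h
    simpa [Polynomial.eval_finset_sum] using this
  -- row and column sums
  have hKrow : ∀ p, (∑ q, K p q) = (φ p).eval 0 := by
    intro p
    have hint : ∀ q ∈ (univ : Finset (Fin (N+1))), IntervalIntegrable
        (fun t => (Polynomial.derivative (φ p)).eval t * (φ q).eval t) volume 0 1 :=
      fun q _ => (((Polynomial.derivative (φ p)).continuous.mul (φ q).continuous)).intervalIntegrable 0 1
    calc (∑ q, K p q)
        = (φ p).eval 1 * (∑ q, (φ q).eval 1)
          - ∑ q, ∫ t in (0:ℝ)..1, (Polynomial.derivative (φ p)).eval t * (φ q).eval t := by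
          simp only [hK, Finset.sum_sub_distrib, Finset.mul_sum]
      _ = (φ p).eval 1 - ∫ t in (0:ℝ)..1, (Polynomial.derivative (φ p)).eval t := by
          rw [hsum 1, mul_one, ← intervalIntegral.integral_finset_sum hint]
          congr 1
          refine intervalIntegral.integral_congr fun t _ => ?_
          rw [← Finset.mul_sum, hsum t, mul_one]
      _ = (φ p).eval 0 := by
          rw [intervalIntegral.integral_eq_sub_of_hasDerivAt (fun t _ => (φ p).hasDerivAt t)
            ((Polynomial.derivative (φ p)).continuous.intervalIntegrable 0 1)]
          ring
  have hKcol : ∀ q, (∑ p, K p q) = (φ q).eval 1 := by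
    intro q
    have hint : ∀ p ∈ (univ : Finset (Fin (N+1))), IntervalIntegrable
        (fun t => (Polynomial.derivative (φ p)).eval t * (φ q).eval t) volume 0 1 :=
      fun p _ => (((Polynomial.derivative (φ p)).continuous.mul (φ q).continuous)).intervalIntegrable 0 1
    calc (∑ p, K p q)
        = (∑ p, (φ p).eval 1) * (φ q).eval 1
          - ∑ p, ∫ t in (0:ℝ)..1, (Polynomial.derivative (φ p)).eval t * (φ q).eval t := by
          simp only [hK, Finset.sum_sub_distrib, ← Finset.sum_mul]
      _ = (φ q).eval 1 - ∫ t in (0:ℝ)..1,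
            (∑ p, (Polynomial.derivative (φ p)).eval t) * (φ q).eval t := by
          rw [hsum 1, one_mul, ← intervalIntegral.integral_finset_sum hint]
          congr 1
          refine intervalIntegral.integral_congr fun t _ => ?_
          rw [Finset.sum_mul]
      _ = (φ q).eval 1 := by
          have hz0 : Set.EqOn (fun t => (∑ p, (Polynomial.derivative (φ p)).eval t) * (φ q).eval t)
              (fun _ => (0:ℝ)) (Set.uIcc (0:ℝ) 1) := fun t _ => by
            simp only [hdsum t, zero_mul]
          rw [intervalIntegral.integral_congr hz0]
          simp
  have hMcol : ∀ q, (∑ p, M p q) = w q := by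
    intro q
    have hint : ∀ p ∈ (univ : Finset (Fin (N+1))), IntervalIntegrable
        (fun t => (φ p).eval t * (φ q).eval t) volume 0 1 :=
      fun p _ => ((φ p).continuous.mul (φ q).continuous).intervalIntegrable 0 1
    rw [hw q]
    calc (∑ p, M p q) = ∑ p, ∫ t in (0:ℝ)..1, (φ p).eval t * (φ q).eval t := by
          simp only [hM]
      _ = ∫ t in (0:ℝ)..1, (φ q).eval t := by
          rw [← intervalIntegral.integral_finset_sum hint]
          refine intervalIntegral.integral_congr fun t _ => ?_
          rw [← Finset.sum_mul, hsum t, one_mul]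
  -- complexified matrices
  set Kc : Matrix (Fin (N+1)) (Fin (N+1)) ℂ := K.map Complex.ofRealHom with hKc
  set Mc : Matrix (Fin (N+1)) (Fin (N+1)) ℂ := M.map Complex.ofRealHom with hMc
  set A : Matrix (Fin (N+1)) (Fin (N+1)) ℂ := Kc - z • Mc with hA
  have hKB : K * B = M := by
    rw [hB, ← Matrix.mul_assoc, Matrix.mul_nonsing_inv K hKunit, Matrix.one_mul]
  have hBcmap : Bc = B.map Complex.ofRealHom := by
    ext p q
    simp [hBc, Matrix.map_apply]
  have hmul : Kc * (1 - z • Bc) = A := by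
    rw [Matrix.mul_sub, Matrix.mul_one, Matrix.mul_smul, hBcmap, hA, hKc, hMc,
      ← Matrix.map_mul, hKB]
  have hAapp : ∀ (U : Fin (N+1) → ℂ) p, A.mulVec U p
      = ∑ q, (((K p q : ℝ) : ℂ) - z * ((M p q : ℝ) : ℂ)) * U q := by
    intro U p
    simp [hA, Matrix.mulVec, dotProduct, Matrix.sub_apply, Matrix.smul_apply,
      Matrix.map_apply, smul_eq_mul, hKc, hMc]
  have hquad : ∀ (U : Fin (N+1) → ℂ), (∑ p, (starRingEnd ℂ) (U p) * A.mulVec U p)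
      = ∑ p, ∑ q, (starRingEnd ℂ) (U p) * (((K p q : ℝ) : ℂ) - z * ((M p q : ℝ) : ℂ)) * U q := by
    intro U
    refine Finset.sum_congr rfl fun p _ => ?_
    rw [hAapp U p, Finset.mul_sum]
    exact Finset.sum_congr rfl fun q _ => by ring
  -- injectivity of A
  have hinj : ∀ U : Fin (N+1) → ℂ, A.mulVec U = 0 → U = 0 := by
    intro U hU
    have hE := aux_energy (N+1) φ K M hK hM z U
    have hE0 : (∑ p, ∑ q, (starRingEnd ℂ) (U p) *
        (((K p q : ℝ) : ℂ) - z * ((M p q : ℝ) : ℂ)) * U q) = 0 := by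
      rw [← hquad U, hU]
      simp
    rw [hE0] at hE
    simp only [Complex.zero_re] at hE
    have hInn : 0 ≤ ∫ t in (0:ℝ)..1, Complex.normSq (∑ q, U q * (((φ q).eval t : ℝ) : ℂ)) :=
      intervalIntegral.integral_nonneg (by norm_num) (fun t _ => Complex.normSq_nonneg _)
    have hI0 : (∫ t in (0:ℝ)..1, Complex.normSq (∑ q, U q * (((φ q).eval t : ℝ) : ℂ))) = 0 := by
      have h1 := Complex.normSq_nonneg (∑ q, U q * (((φ q).eval 1 : ℝ) : ℂ))
      have h2 := Complex.normSq_nonneg (∑ q, U q * (((φ q).eval 0 : ℝ) : ℂ))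
      have hle : (∫ t in (0:ℝ)..1, Complex.normSq (∑ q, U q * (((φ q).eval t : ℝ) : ℂ))) ≤ 0 := by
        nlinarith [hE, h1, h2]
      linarith
    funext p
    have hcu : Continuous (fun t : ℝ => Complex.normSq (∑ q, U q * (((φ q).eval t : ℝ) : ℂ))) := by
      apply Complex.continuous_normSq.comp
      exact continuous_finset_sum _ fun q _ =>
        continuous_const.mul (Complex.continuous_ofReal.comp (φ q).continuous)
    have h0 := aux_zero_of_integral hcu (fun t => Complex.normSq_nonneg _) hI0 (hτmem p)
    have hup : (∑ q, U q * (((φ q).eval (τ p) : ℝ) : ℂ)) = U p := by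
      have hift : ∀ q, (((φ q).eval (τ p) : ℝ) : ℂ) = if q = p then 1 else 0 := by
        intro q
        rw [hφ q p]
        split <;> simp
      simp only [hift, mul_ite, mul_one, mul_zero, Finset.sum_ite_eq', Finset.mem_univ, if_true]
    rw [hup] at h0
    simpa using Complex.normSq_eq_zero.mp h0
  have hdetA : IsUnit A.det := by
    rw [isUnit_iff_ne_zero]
    intro h
    obtain ⟨v, hv0, hv⟩ := Matrix.exists_mulVec_eq_zero_iff.mpr h
    exact hv0 (hinj v hv)
  have hdetC : IsUnit (1 - z • Bc).det := by
    have hdd : Kc.det * (1 - z • Bc).det = A.det := by rw [← Matrix.det_mul, hmul]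
    rw [isUnit_iff_ne_zero]
    intro h0
    rw [h0, mul_zero] at hdd
    exact (isUnit_iff_ne_zero.mp hdetA) hdd.symm
  refine ⟨hdetC, ?_⟩
  set C : Matrix (Fin (N+1)) (Fin (N+1)) ℂ := 1 - z • Bc with hC
  set V : Fin (N+1) → ℂ := C⁻¹.mulVec (fun _ => (1:ℂ)) with hV
  clear_value V
  have hCV : C.mulVec V = fun _ => (1:ℂ) := by
    rw [hV, Matrix.mulVec_mulVec, Matrix.mul_nonsing_inv _ hdetC, Matrix.one_mulVec]
  have hAV : A.mulVec V = fun p => (((φ p).eval 0 : ℝ) : ℂ) := by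
    have h1 : Kc.mulVec (C.mulVec V) = A.mulVec V := by
      rw [Matrix.mulVec_mulVec, hmul]
    rw [← h1, hCV]
    funext p
    have : (∑ q, (K p q : ℂ)) = (((φ p).eval 0 : ℝ) : ℂ) := by
      rw [← Complex.ofReal_sum, hKrow p]
    simpa [Matrix.mulVec, dotProduct, Matrix.map_apply, hKc] using this
  have hTsum : (∑ p, ∑ q, ((w p : ℝ) : ℂ) * C⁻¹ p q) = ∑ p, ((w p : ℝ) : ℂ) * V p := by
    refine Finset.sum_congr rfl fun p _ => ?_
    rw [hV]
    simp [Matrix.mulVec, dotProduct, Finset.mul_sum]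
  -- weak form: sum over all rows
  have hsumA : (∑ p, A.mulVec V p) = 1 := by
    simp only [hAV]
    rw [← Complex.ofReal_sum, hsum 0, Complex.ofReal_one]
  have hLHS : (∑ p, A.mulVec V p)
      = (∑ q, V q * (((φ q).eval 1 : ℝ) : ℂ)) - z * ∑ q, ((w q : ℝ) : ℂ) * V q := by
    calc (∑ p, A.mulVec V p)
        = ∑ p, ∑ q, (((K p q : ℝ) : ℂ) - z * ((M p q : ℝ) : ℂ)) * V q := by
          exact Finset.sum_congr rfl fun p _ => hAapp V p
      _ = ∑ q, (∑ p, (((K p q : ℝ) : ℂ) - z * ((M p q : ℝ) : ℂ))) * V q := by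
          rw [Finset.sum_comm]
          exact Finset.sum_congr rfl fun q _ => (Finset.sum_mul _ _ _).symm
      _ = ∑ q, ((((φ q).eval 1 : ℝ) : ℂ) - z * ((w q : ℝ) : ℂ)) * V q := by
          refine Finset.sum_congr rfl fun q _ => ?_
          congr 1
          rw [Finset.sum_sub_distrib, ← Finset.mul_sum, ← Complex.ofReal_sum,
            ← Complex.ofReal_sum, hKcol q, hMcol q]
      _ = (∑ q, V q * (((φ q).eval 1 : ℝ) : ℂ)) - z * ∑ q, ((w q : ℝ) : ℂ) * V q := by
          simp only [sub_mul, Finset.sum_sub_distrib, Finset.mul_sum]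
          congr 1
          · exact Finset.sum_congr rfl fun q _ => mul_comm _ _
          · exact Finset.sum_congr rfl fun q _ => by ring
  have hu1 : (∑ q, V q * (((φ q).eval 1 : ℝ) : ℂ)) = 1 + z * ∑ q, ((w q : ℝ) : ℂ) * V q := by
    linear_combination hsumA - hLHS
  -- energy for V
  have hEV : (∑ p, ∑ q, (starRingEnd ℂ) (V p) *
      (((K p q : ℝ) : ℂ) - z * ((M p q : ℝ) : ℂ)) * V q)
      = (starRingEnd ℂ) (∑ q, V q * (((φ q).eval 0 : ℝ) : ℂ)) := by
    rw [← hquad V, hAV, map_sum]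
    refine Finset.sum_congr rfl fun q _ => ?_
    simp [map_mul, Complex.conj_ofReal]
  have hE := aux_energy (N+1) φ K M hK hM z V
  rw [hEV] at hE
  rw [Complex.conj_re] at hE
  have hInn : 0 ≤ ∫ t in (0:ℝ)..1, Complex.normSq (∑ q, V q * (((φ q).eval t : ℝ) : ℂ)) :=
    intervalIntegral.integral_nonneg (by norm_num) (fun t _ => Complex.normSq_nonneg _)
  have hIne : (∫ t in (0:ℝ)..1, Complex.normSq (∑ q, V q * (((φ q).eval t : ℝ) : ℂ))) ≠ 0 := by
    intro h0
    have hV0 : V = 0 := by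
      funext p
      have hcu : Continuous (fun t : ℝ => Complex.normSq (∑ q, V q * (((φ q).eval t : ℝ) : ℂ))) := by
        apply Complex.continuous_normSq.comp
        exact continuous_finset_sum _ fun q _ =>
          continuous_const.mul (Complex.continuous_ofReal.comp (φ q).continuous)
      have h0' := aux_zero_of_integral hcu (fun t => Complex.normSq_nonneg _) h0 (hτmem p)
      have hup : (∑ q, V q * (((φ q).eval (τ p) : ℝ) : ℂ)) = V p := by
        have hift : ∀ q, (((φ q).eval (τ p) : ℝ) : ℂ) = if q = p then 1 else 0 := by
          intro q
          rw [hφ q p]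
          split <;> simp
        simp only [hift, mul_ite, mul_one, mul_zero, Finset.sum_ite_eq', Finset.mem_univ, if_true]
      rw [hup] at h0'
      simpa using Complex.normSq_eq_zero.mp h0'
    have hone := congrFun hCV ⟨0, Nat.succ_pos N⟩
    rw [hV0, Matrix.mulVec_zero] at hone
    have : (0:ℂ) = 1 := hone
    exact zero_ne_one this
  have hIpos : 0 < ∫ t in (0:ℝ)..1, Complex.normSq (∑ q, V q * (((φ q).eval t : ℝ) : ℂ)) :=
    lt_of_le_of_ne hInn (Ne.symm hIne)
  have hnsq : Complex.normSq (∑ q, V q * (((φ q).eval 1 : ℝ) : ℂ)) < 1 := by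
    have hns0 := Complex.normSq_apply (∑ q, V q * (((φ q).eval 0 : ℝ) : ℂ))
    nlinarith [sq_nonneg ((∑ q, V q * (((φ q).eval 0 : ℝ) : ℂ)).re - 1),
      sq_nonneg ((∑ q, V q * (((φ q).eval 0 : ℝ) : ℂ)).im),
      mul_pos (neg_pos.mpr hz) hIpos]
  rw [hTsum, ← hu1]
  nlinarith [Complex.sq_norm (∑ q, V q * (((φ q).eval 1 : ℝ) : ℂ)),
    norm_nonneg (∑ q, V q * (((φ q).eval 1 : ℝ) : ℂ))]
end

section
/- L-stability of the ADER-DG method with local DG predictor: there exist constants C > 0 and r₀ > 0 such that for every z ∈ ℂ with |z| ≥ r₀ the matrix I − z·B is invertible and |R(z)| ≤ C/|z|, where R(z) = 1 + z · w^T (I − z B)^{-1} 𝟙; in particular R(z) → 0 as |z| → ∞. -/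
set_option maxHeartbeats 1000000

open Matrix Polynomial intervalIntegral MeasureTheory

theorem aux_sum_one {N : ℕ} (τ : Fin (N + 1) → ℝ) (hτinj : Function.Injective τ)
    (φ : Fin (N + 1) → Polynomial ℝ)
    (hφdeg : ∀ p, (φ p).natDegree ≤ N)
    (hφ : ∀ p l, (φ p).eval (τ l) = if p = l then 1 else 0) :
    (∑ p, φ p) = (1 : Polynomial ℝ) := by
  have h0 : (∑ p, φ p) - 1 = 0 := by
    apply Polynomial.eq_zero_of_natDegree_lt_card_of_eval_eq_zero _ hτinj
    · intro l
      simp [Polynomial.eval_finset_sum, hφ]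
    · calc ((∑ p, φ p) - 1).natDegree ≤ max (∑ p, φ p).natDegree (1:Polynomial ℝ).natDegree :=
            Polynomial.natDegree_sub_le _ _
        _ ≤ N := by
            simp only [Polynomial.natDegree_one, max_le_iff]
            exact ⟨Polynomial.natDegree_sum_le_of_forall_le _ _ fun p _ => hφdeg p, Nat.zero_le N⟩
        _ < Fintype.card (Fin (N + 1)) := by simp
  linear_combination h0

theorem aux_Mdet {N : ℕ} (τ : Fin (N + 1) → ℝ)
    (hτmem : ∀ p, τ p ∈ Set.Ioo (0:ℝ) 1)
    (φ : Fin (N + 1) → Polynomial ℝ)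
    (hφ : ∀ p l, (φ p).eval (τ l) = if p = l then 1 else 0)
    (M : Matrix (Fin (N + 1)) (Fin (N + 1)) ℝ)
    (hM : ∀ p q, M p q = ∫ t in (0:ℝ)..1, (φ p).eval t * (φ q).eval t) :
    IsUnit M.det := by
  rw [isUnit_iff_ne_zero, Ne, ← Matrix.exists_mulVec_eq_zero_iff]
  rintro ⟨v, hv, hMv⟩
  apply hv
  by_contra hv0
  -- the function f and its square g
  set f : ℝ → ℝ := fun t => ∑ p, v p * (φ p).eval t with hf
  have hfc : Continuous f := by
    apply continuous_finset_sum
    intro p _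
    exact continuous_const.mul (φ p).continuous
  set g : ℝ → ℝ := fun t => (f t) ^ 2 with hg
  have hgc : Continuous g := hfc.pow 2
  -- the integral of g equals v ⬝ᵥ (M *ᵥ v) = 0
  have hI : (∫ t in (0:ℝ)..1, g t) = 0 := by
    have hexp : ∀ t : ℝ, g t = ∑ p, ∑ q,
        (v p * (φ p).eval t) * (v q * (φ q).eval t) := by
      intro t
      rw [hg, hf]
      simp only [sq, Finset.sum_mul_sum]
    have h1 : (∫ t in (0:ℝ)..1, g t)
        = ∑ p, ∑ q, v p * v q * M p q := by
      rw [intervalIntegral.integral_congr (g := fun t => ∑ p, ∑ q,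
        (v p * (φ p).eval t) * (v q * (φ q).eval t)) (fun t _ => hexp t)]
      rw [intervalIntegral.integral_finset_sum]
      · refine Finset.sum_congr rfl fun p _ => ?_
        rw [intervalIntegral.integral_finset_sum]
        · refine Finset.sum_congr rfl fun q _ => ?_
          rw [hM]
          rw [← intervalIntegral.integral_const_mul]
          congr 1
          ext t
          ring
        · intro q _
          exact ((continuous_const.mul (φ p).continuous).mul
            (continuous_const.mul (φ q).continuous)).intervalIntegrable _ _
      · intro p _
        apply Continuous.intervalIntegrable
        apply continuous_finset_sum
        intro q _
        exact (continuous_const.mul (φ p).continuous).mul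
          (continuous_const.mul (φ q).continuous)
    rw [h1]
    have h2 : ∑ p, ∑ q, v p * v q * M p q = v ⬝ᵥ (M *ᵥ v) := by
      simp only [dotProduct, Matrix.mulVec, dotProduct, Finset.mul_sum]
      refine Finset.sum_congr rfl fun p _ => Finset.sum_congr rfl fun q _ => by ring
    rw [h2, hMv, dotProduct_zero]
  -- but the integral of g is positive
  obtain ⟨l, hl⟩ := Function.ne_iff.mp hv0
  have hgl : 0 < g (τ l) := by
    have : f (τ l) = v l := by
      rw [hf]
      simp only [hφ, mul_ite, mul_one, mul_zero]
      simp
    rw [hg]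
    simp only [this]
    exact lt_of_le_of_ne (sq_nonneg _) (Ne.symm (pow_ne_zero 2 hl))
  have hpos : 0 < ∫ t in (0:ℝ)..1, g t := by
    rw [intervalIntegral.integral_of_le zero_le_one]
    rw [MeasureTheory.setIntegral_pos_iff_support_of_nonneg_ae]
    · -- 0 < volume (support g ∩ Ioc 0 1)
      have hU : IsOpen ({t : ℝ | g t ≠ 0} ∩ Set.Ioo 0 1) :=
        (isOpen_compl_singleton.preimage hgc).inter isOpen_Ioo
      have hne : (({t : ℝ | g t ≠ 0} ∩ Set.Ioo 0 1)).Nonempty :=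
        ⟨τ l, ⟨ne_of_gt hgl, hτmem l⟩⟩
      refine lt_of_lt_of_le (hU.measure_pos volume hne) (measure_mono ?_)
      rintro t ⟨ht1, ht2⟩
      exact ⟨ht1, Set.Ioo_subset_Ioc_self ht2⟩
    · exact Filter.Eventually.of_forall fun t => sq_nonneg _
    · exact hgc.integrableOn_Ioc
  rw [hI] at hpos
  exact lt_irrefl 0 hpos

theorem aux_w {N : ℕ} (φ : Fin (N + 1) → Polynomial ℝ)
    (hone : (∑ p, φ p) = (1 : Polynomial ℝ))
    (w : Fin (N + 1) → ℝ) (hw : ∀ p, w p = ∫ t in (0:ℝ)..1, (φ p).eval t)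
    (M : Matrix (Fin (N + 1)) (Fin (N + 1)) ℝ)
    (hM : ∀ p q, M p q = ∫ t in (0:ℝ)..1, (φ p).eval t * (φ q).eval t) (p : Fin (N + 1)) :
    w p = ∑ q, M p q := by
  have heval : ∀ t : ℝ, ∑ q, (φ q).eval t = 1 := by
    intro t
    have := congrArg (Polynomial.eval t) hone
    simpa [Polynomial.eval_finset_sum] using this
  rw [hw]
  have : (∫ t in (0:ℝ)..1, (φ p).eval t)
      = ∫ t in (0:ℝ)..1, ∑ q, (φ p).eval t * (φ q).eval t := by
    apply intervalIntegral.integral_congr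
    intro t _
    simp only [← Finset.mul_sum, heval, mul_one]
  rw [this, intervalIntegral.integral_finset_sum]
  · exact Finset.sum_congr rfl fun q _ => by rw [hM]
  · intro q _
    exact ((φ p).continuous.mul (φ q).continuous).intervalIntegrable _ _

theorem aux_Ksum {N : ℕ} (φ : Fin (N + 1) → Polynomial ℝ)
    (hone : (∑ p, φ p) = (1 : Polynomial ℝ))
    (K : Matrix (Fin (N + 1)) (Fin (N + 1)) ℝ)
    (hK : ∀ p q, K p q =
      (φ p).eval 1 * (φ q).eval 1 -
        ∫ t in (0:ℝ)..1, (Polynomial.derivative (φ p)).eval t * (φ q).eval t) :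
    ∑ p, ∑ q, K p q = 1 := by
  have heval : ∀ t : ℝ, ∑ q, (φ q).eval t = 1 := by
    intro t
    have := congrArg (Polynomial.eval t) hone
    simpa [Polynomial.eval_finset_sum] using this
  have hrow : ∀ p, ∑ q, K p q = (φ p).eval 0 := by
    intro p
    have h1 : ∑ q, (φ p).eval 1 * (φ q).eval 1 = (φ p).eval 1 := by
      rw [← Finset.mul_sum, heval, mul_one]
    have h2 : ∑ q, (∫ t in (0:ℝ)..1, (Polynomial.derivative (φ p)).eval t * (φ q).eval t)
        = ∫ t in (0:ℝ)..1, (Polynomial.derivative (φ p)).eval t := by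
      rw [← intervalIntegral.integral_finset_sum]
      · apply intervalIntegral.integral_congr
        intro t _
        simp only [← Finset.mul_sum, heval, mul_one]
      · intro q _
        exact ((Polynomial.derivative (φ p)).continuous.mul
          (φ q).continuous).intervalIntegrable _ _
    have h3 : (∫ t in (0:ℝ)..1, (Polynomial.derivative (φ p)).eval t)
        = (φ p).eval 1 - (φ p).eval 0 := by
      apply intervalIntegral.integral_deriv_eq_sub' (fun t => (φ p).eval t)
      · funext x
        exact ((φ p).hasDerivAt x).deriv
      · intro x _
        exact ((φ p).hasDerivAt x).differentiableAt
      · exact (Polynomial.derivative (φ p)).continuous.continuousOn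
    simp only [hK]
    rw [Finset.sum_sub_distrib, h1, h2, h3]
    ring
  simp only [hrow]
  have := heval 0
  simpa using this

theorem aux_rowsum {n : Type*} [Fintype n] [DecidableEq n] (X : Matrix n n ℂ) (r : n) :
    letI := Matrix.linftyOpNormedRing (α := ℂ) (n := n)
    ∑ q, ‖X r q‖ ≤ ‖X‖ := by
  letI := Matrix.linftyOpNormedRing (α := ℂ) (n := n)
  rw [Matrix.linfty_opNorm_def]
  have h : (∑ q, ‖X r q‖₊ : NNReal) ≤ Finset.univ.sup fun i => ∑ j, ‖X i j‖₊ :=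
    Finset.le_sup (f := fun i => ∑ j, ‖X i j‖₊) (Finset.mem_univ r)
  calc ∑ q, ‖X r q‖ = ((∑ q, ‖X r q‖₊ : NNReal) : ℝ) := by push_cast; rfl
    _ ≤ _ := by exact_mod_cast h

/-- L-stability of the ADER-DG method with local DG predictor: there exist `C > 0`
and `r₀ > 0` such that for all `z ∈ ℂ` with `|z| ≥ r₀` the matrix `I − z•B` is invertible and
`|R(z)| ≤ C / |z|`, where `R(z) = 1 + z · wᵀ (I − z B)⁻¹ 𝟙`; in particular `R(z) → 0` as
`|z| → ∞`. -/
theorem ader_dg_L_stability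
    (N : ℕ) (hN : 1 ≤ N)
    (τ : Fin (N + 1) → ℝ) (hτmono : StrictMono τ)
    (hτmem : ∀ p, τ p ∈ Set.Ioo (0:ℝ) 1)
    (P : Polynomial ℝ) (hPdeg : P.natDegree = N + 1)
    (hPorth : ∀ Q : Polynomial ℝ, Q.natDegree ≤ N →
      (∫ t in (0:ℝ)..1, P.eval t * Q.eval t) = 0)
    (hPzero : ∀ p, P.eval (τ p) = 0)
    (φ : Fin (N + 1) → Polynomial ℝ)
    (hφdeg : ∀ p, (φ p).natDegree ≤ N)
    (hφ : ∀ p l, (φ p).eval (τ l) = if p = l then 1 else 0)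
    (w : Fin (N + 1) → ℝ) (hw : ∀ p, w p = ∫ t in (0:ℝ)..1, (φ p).eval t)
    (K M : Matrix (Fin (N + 1)) (Fin (N + 1)) ℝ)
    (hK : ∀ p q, K p q =
      (φ p).eval 1 * (φ q).eval 1 -
        ∫ t in (0:ℝ)..1, (Polynomial.derivative (φ p)).eval t * (φ q).eval t)
    (hM : ∀ p q, M p q = ∫ t in (0:ℝ)..1, (φ p).eval t * (φ q).eval t)
    (hKunit : IsUnit K.det)
    (B : Matrix (Fin (N + 1)) (Fin (N + 1)) ℝ) (hB : B = K⁻¹ * M)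
    (Bc : Matrix (Fin (N + 1)) (Fin (N + 1)) ℂ) (hBc : ∀ p q, Bc p q = (B p q : ℂ)) :
    ∃ C > (0:ℝ), ∃ r₀ > (0:ℝ), ∀ z : ℂ, r₀ ≤ ‖z‖ →
      IsUnit (1 - z • Bc).det ∧
        ‖1 + z * ∑ p, ∑ q, (w p : ℂ) * (1 - z • Bc)⁻¹ p q‖ ≤
          C / ‖z‖ := by
  classical
  have hτinj : Function.Injective τ := hτmono.injective
  have hone : (∑ p, φ p) = (1 : Polynomial ℝ) := aux_sum_one τ hτinj φ hφdeg hφ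
  have hw' : ∀ p, w p = ∑ q, M p q := fun p => aux_w φ hone w hw M hM p
  have hKsum : ∑ p, ∑ q, K p q = 1 := aux_Ksum φ hone K hK
  have hMsymm : ∀ p q, M p q = M q p := by
    intro p q
    rw [hM p q, hM q p]
    apply intervalIntegral.integral_congr
    intro t _
    exact mul_comm _ _
  have hMdet : IsUnit M.det := aux_Mdet τ hτmem φ hφ M hM
  have hKM : K * B = M := by
    rw [hB, ← Matrix.mul_assoc, Matrix.mul_nonsing_inv K hKunit, Matrix.one_mul]
  have hBdet : IsUnit B.det := by
    rw [hB, Matrix.det_mul]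
    exact (Matrix.isUnit_nonsing_inv_det K hKunit).mul hMdet
  set Kc := K.map (Complex.ofRealHom : ℝ →+* ℂ) with hKc
  set Mc := M.map (Complex.ofRealHom : ℝ →+* ℂ) with hMc
  have hBcmap : Bc = B.map (Complex.ofRealHom : ℝ →+* ℂ) := by
    ext p q
    simp [hBc, Matrix.map_apply]
  have hKMc : Kc * Bc = Mc := by
    rw [hBcmap, hKc, hMc, ← Matrix.map_mul, hKM]
  have hBcdet : IsUnit Bc.det := by
    have h := hBdet.map (Complex.ofRealHom : ℝ →+* ℂ)
    rw [RingHom.map_det] at h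
    rwa [hBcmap, ← RingHom.mapMatrix_apply]
  have hKcsum : ∑ r, ∑ q, Kc r q = (1 : ℂ) := by
    simp only [hKc, Matrix.map_apply]
    rw [← Complex.ofReal_one, ← hKsum]
    push_cast
    rfl
  have hwc : ∀ p, (w p : ℂ) = ∑ r, Mc r p := by
    intro p
    rw [hw' p]
    push_cast
    simp only [hMc, Matrix.map_apply]
    exact Finset.sum_congr rfl fun r _ => by rw [hMsymm p r]; rfl
  -- norm structure
  letI instN : NormedRing (Matrix (Fin (N + 1)) (Fin (N + 1)) ℂ) := Matrix.linftyOpNormedRing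
  letI instA : NormedAlgebra ℂ (Matrix (Fin (N + 1)) (Fin (N + 1)) ℂ) :=
    Matrix.linftyOpNormedAlgebra
  haveI : CompleteSpace (Matrix (Fin (N + 1)) (Fin (N + 1)) ℂ) := by infer_instance
  set c : ℝ := ‖Bc⁻¹‖ with hc
  set c2 : ℝ := ‖(1 : Matrix (Fin (N + 1)) (Fin (N + 1)) ℂ)‖ + 2 with hc2
  have hc0 : 0 ≤ c := norm_nonneg _
  have hc20 : 0 < c2 := by positivity
  refine ⟨((N : ℝ) + 1) * ‖Kc‖ * (c2 * c) + 1, by positivity, 2 * c + 1, by positivity, ?_⟩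
  intro z hz
  have hzpos : (0:ℝ) < ‖z‖ := lt_of_lt_of_le (by linarith) hz
  have hz0 : z ≠ 0 := by
    intro h
    rw [h, norm_zero] at hzpos
    exact lt_irrefl 0 hzpos
  set s : Matrix (Fin (N + 1)) (Fin (N + 1)) ℂ := z⁻¹ • Bc⁻¹ with hs
  have hsnorm : ‖s‖ = c / ‖z‖ := by
    rw [hs, norm_smul, norm_inv, div_eq_mul_inv, mul_comm]
  have hshalf : ‖s‖ ≤ 1 / 2 := by
    rw [hsnorm, div_le_iff₀ hzpos]
    linarith
  have hs1 : ‖s‖ < 1 := lt_of_le_of_lt hshalf (by norm_num)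
  have hu : IsUnit ((1 : Matrix (Fin (N + 1)) (Fin (N + 1)) ℂ) - s) :=
    isUnit_one_sub_of_norm_lt_one hs1
  have huinv : ‖Ring.inverse ((1 : Matrix (Fin (N + 1)) (Fin (N + 1)) ℂ) - s)‖ ≤ c2 := by
    rw [← geom_series_eq_inverse s hs1]
    refine le_trans (tsum_geometric_le_of_norm_lt_one s hs1) ?_
    have h2 : (1 - ‖s‖)⁻¹ ≤ 2 := by
      have hhalf : (1:ℝ)/2 ≤ 1 - ‖s‖ := by linarith
      calc (1 - ‖s‖)⁻¹ ≤ ((1:ℝ)/2)⁻¹ := by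
            apply inv_anti₀ (by norm_num) hhalf
        _ = 2 := by norm_num
    rw [hc2]
    linarith
  have hBcinv : Bc * Bc⁻¹ = 1 := Matrix.mul_nonsing_inv _ hBcdet
  have hA : (1 : Matrix (Fin (N + 1)) (Fin (N + 1)) ℂ) - z • Bc = (-z) • (Bc * (1 - s)) := by
    rw [Matrix.mul_sub, Matrix.mul_one, hs, Matrix.mul_smul, hBcinv, smul_sub, smul_smul,
      neg_mul, mul_inv_cancel₀ hz0, neg_smul, neg_smul, one_smul, sub_neg_eq_add]
    abel
  set X : Matrix (Fin (N + 1)) (Fin (N + 1)) ℂ :=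
    (-z)⁻¹ • (Ring.inverse ((1 : Matrix (Fin (N + 1)) (Fin (N + 1)) ℂ) - s) * Bc⁻¹) with hX
  have hAX : ((1 : Matrix (Fin (N + 1)) (Fin (N + 1)) ℂ) - z • Bc) * X = 1 := by
    rw [hA, hX, Matrix.smul_mul, Matrix.mul_smul, smul_smul,
      mul_inv_cancel₀ (neg_ne_zero.mpr hz0), one_smul]
    calc Bc * (1 - s) * (Ring.inverse (1 - s) * Bc⁻¹)
        = Bc * ((1 - s) * Ring.inverse (1 - s)) * Bc⁻¹ := by
          rw [Matrix.mul_assoc, Matrix.mul_assoc, Matrix.mul_assoc]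
      _ = 1 := by rw [Ring.mul_inverse_cancel _ hu, Matrix.mul_one, hBcinv]
  have hAdet : IsUnit ((1 : Matrix (Fin (N + 1)) (Fin (N + 1)) ℂ) - z • Bc).det :=
    IsUnit.of_mul_eq_one X.det (by rw [← Matrix.det_mul, hAX, Matrix.det_one])
  refine ⟨hAdet, ?_⟩
  have hAinv : ((1 : Matrix (Fin (N + 1)) (Fin (N + 1)) ℂ) - z • Bc)⁻¹ = X :=
    Matrix.inv_eq_right_inv hAX
  set T := ((1 : Matrix (Fin (N + 1)) (Fin (N + 1)) ℂ) - z • Bc)⁻¹ with hT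
  have hAAinv : ((1 : Matrix (Fin (N + 1)) (Fin (N + 1)) ℂ) - z • Bc) * T = 1 := by
    rw [hAinv]
    exact hAX
  have hTnorm : ‖T‖ ≤ c2 * c / ‖z‖ := by
    rw [hAinv, hX, norm_smul, norm_inv, norm_neg]
    rw [div_eq_mul_inv, mul_comm (c2 * c)]
    apply mul_le_mul_of_nonneg_left _ (inv_nonneg.mpr (le_of_lt hzpos))
    calc ‖Ring.inverse ((1 : Matrix (Fin (N + 1)) (Fin (N + 1)) ℂ) - s) * Bc⁻¹‖
        ≤ ‖Ring.inverse ((1 : Matrix (Fin (N + 1)) (Fin (N + 1)) ℂ) - s)‖ * ‖Bc⁻¹‖ :=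
          norm_mul_le _ _
      _ ≤ c2 * c := mul_le_mul_of_nonneg_right huinv hc0
  -- the key identity
  have hKA : Kc * ((1 : Matrix (Fin (N + 1)) (Fin (N + 1)) ℂ) - z • Bc) = Kc - z • Mc := by
    rw [Matrix.mul_sub, Matrix.mul_one, Matrix.mul_smul, hKMc]
  have hMT : (z • Mc) * T = Kc * T - Kc := by
    have h1 : z • Mc = Kc - Kc * ((1 : Matrix (Fin (N + 1)) (Fin (N + 1)) ℂ) - z • Bc) := by
      rw [hKA, sub_sub_cancel]
    rw [h1, Matrix.sub_mul, Matrix.mul_assoc, hAAinv, Matrix.mul_one]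
  have hL : z * ∑ p, ∑ q, (w p : ℂ) * T p q = ∑ r, ∑ q, ((z • Mc) * T) r q := by
    calc z * ∑ p, ∑ q, (w p : ℂ) * T p q
        = ∑ p, ∑ q, ∑ r, z * (Mc r p * T p q) := by
          rw [Finset.mul_sum]
          refine Finset.sum_congr rfl fun p _ => ?_
          rw [Finset.mul_sum]
          refine Finset.sum_congr rfl fun q _ => ?_
          rw [hwc p, Finset.sum_mul, Finset.mul_sum]
      _ = ∑ q, ∑ p, ∑ r, z * (Mc r p * T p q) := Finset.sum_comm
      _ = ∑ q, ∑ r, ∑ p, z * (Mc r p * T p q) :=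
          Finset.sum_congr rfl fun q _ => Finset.sum_comm
      _ = ∑ r, ∑ q, ∑ p, z * (Mc r p * T p q) := Finset.sum_comm
      _ = ∑ r, ∑ q, ((z • Mc) * T) r q := by
          refine Finset.sum_congr rfl fun r _ => Finset.sum_congr rfl fun q _ => ?_
          rw [Matrix.mul_apply]
          refine Finset.sum_congr rfl fun p _ => ?_
          rw [Matrix.smul_apply, smul_eq_mul]
          ring
  have hid : 1 + z * ∑ p, ∑ q, (w p : ℂ) * T p q = ∑ r, ∑ q, (Kc * T) r q := by
    rw [hL, hMT]
    simp only [Matrix.sub_apply]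
    rw [Finset.sum_congr rfl fun r (_ : r ∈ Finset.univ) =>
        Finset.sum_sub_distrib (fun q => (Kc * T) r q) (fun q => Kc r q),
      Finset.sum_sub_distrib, hKcsum]
    ring
  rw [hid]
  -- final bound
  have habs : ‖∑ r, ∑ q, (Kc * T) r q‖ ≤ ((N:ℝ) + 1) * ‖Kc‖ * (c2 * c / ‖z‖) := by
    calc ‖∑ r, ∑ q, (Kc * T) r q‖
        ≤ ∑ r, ∑ q, ‖(Kc * T) r q‖ := by
          refine le_trans (norm_sum_le _ _) (Finset.sum_le_sum fun r _ => norm_sum_le _ _)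
      _ ≤ ∑ _r : Fin (N + 1), ‖Kc * T‖ :=
          Finset.sum_le_sum fun r _ => aux_rowsum (Kc * T) r
      _ = ((N:ℝ) + 1) * ‖Kc * T‖ := by
          rw [Finset.sum_const, Finset.card_univ, Fintype.card_fin, nsmul_eq_mul]
          push_cast
          ring
      _ ≤ ((N:ℝ) + 1) * (‖Kc‖ * ‖T‖) := by
          apply mul_le_mul_of_nonneg_left (norm_mul_le _ _) (by positivity)
      _ ≤ ((N:ℝ) + 1) * ‖Kc‖ * (c2 * c / ‖z‖) := by
          rw [mul_assoc]
          apply mul_le_mul_of_nonneg_left _ (by positivity)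
          exact mul_le_mul_of_nonneg_left hTnorm (norm_nonneg _)
  refine le_trans habs ?_
  calc ((N:ℝ) + 1) * ‖Kc‖ * (c2 * c / ‖z‖)
      = (((N:ℝ) + 1) * ‖Kc‖ * (c2 * c)) / ‖z‖ := by ring
    _ ≤ (((N:ℝ) + 1) * ‖Kc‖ * (c2 * c) + 1) / ‖z‖ := by
        gcongr
        linarith
end
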